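/- The function f(x,y) = 2·artanh(tanh(x/2)·tanh(y/2)) satisfies sign(f(x,y)) = sign(x)·sign(y) and |f(x,y)| ≤ min(|x|, |y|) for all real x, y. -/

import Mathlib

/-!
Writing `t = tanh (x/2) * tanh (y/2)`, which lies in `(-1, 1)`, the check-node function is
`2 · artanh t`, so `tanh (f(x,y)/2) = t`. Since `u ↦ tanh (u/2)` is strictly increasing, odd and
vanishes at `0`, it preserves signs, which gives the sign rule, and it turns the bound
`|f(x,y)| ≤ |x|` into `|tanh (x/2)| · |tanh (y/2)| ≤ |tanh (x/2)|`, true because `|tanh| < 1`.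
-/

/-- The inverse hyperbolic tangent on `(-1, 1)`. -/
noncomputable def artanh (x : ℝ) : ℝ := (1 / 2) * Real.log ((1 + x) / (1 - x))

/-- The check-node function `f(x,y) = 2·artanh(tanh(x/2)·tanh(y/2))`. -/
noncomputable def checkF (x y : ℝ) : ℝ := 2 * artanh (Real.tanh (x / 2) * Real.tanh (y / 2))

namespace Real

theorem sign_eq_coe_sign (r : ℝ) : Real.sign r = (SignType.sign r : ℝ) := by
  rcases lt_trichotomy r 0 with h | rfl | h
  · simp [sign_of_neg h, _root_.sign_neg h]
  · simp [sign_zero]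
  · simp [sign_of_pos h, _root_.sign_pos h]

theorem sign_mul (a b : ℝ) : Real.sign (a * b) = Real.sign a * Real.sign b := by
  simp only [sign_eq_coe_sign, _root_.sign_mul, SignType.coe_mul]

theorem sign_comp_of_strictMono {f : ℝ → ℝ} (hf : StrictMono f) (hf0 : f 0 = 0) (x : ℝ) :
    Real.sign (f x) = Real.sign x := by
  have hneg : f x < 0 ↔ x < 0 := by simpa only [hf0] using hf.lt_iff_lt (b := 0)
  have hpos : 0 < f x ↔ 0 < x := by simpa only [hf0] using hf.lt_iff_lt (a := 0)
  simp only [Real.sign, hneg, hpos]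

theorem strictMono_tanh : StrictMono tanh := fun x y hxy ↦
  lt_of_not_ge fun hyx ↦ hxy.not_ge <| by
    simpa only [artanh_tanh] using
      artanh_le_artanh (neg_one_lt_tanh y) (tanh_lt_one x) hyx

theorem abs_tanh (x : ℝ) : |tanh x| = tanh |x| := by
  rcases le_total 0 x with hx | hx
  · rw [abs_of_nonneg hx, abs_of_nonneg (by simpa using strictMono_tanh.monotone hx)]
  · rw [abs_of_nonpos hx, abs_of_nonpos (by simpa using strictMono_tanh.monotone hx), tanh_neg]

end Real

theorem strictMono_tanh_half : StrictMono fun u : ℝ ↦ Real.tanh (u / 2) :=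
  Real.strictMono_tanh.comp (strictMono_id.div_const two_pos)

theorem sign_tanh_half (u : ℝ) : Real.sign (Real.tanh (u / 2)) = Real.sign u :=
  Real.sign_comp_of_strictMono strictMono_tanh_half (by simp) u

theorem abs_tanh_half (u : ℝ) : |Real.tanh (u / 2)| = Real.tanh (|u| / 2) := by
  rw [Real.abs_tanh, abs_div, abs_two]

theorem artanh_eq_real_artanh {t : ℝ} (ht : t ∈ Set.Icc (-1) 1) : artanh t = Real.artanh t :=
  (Real.artanh_eq_half_log ht).symm

theorem abs_tanh_mul_tanh_lt_one (x y : ℝ) : |Real.tanh x * Real.tanh y| < 1 := by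
  rw [abs_mul]
  exact mul_lt_one_of_nonneg_of_lt_one_left (abs_nonneg _) (Real.abs_tanh_lt_one x)
    (Real.abs_tanh_lt_one y).le

theorem tanh_half_checkF (x y : ℝ) :
    Real.tanh (checkF x y / 2) = Real.tanh (x / 2) * Real.tanh (y / 2) := by
  have ht := abs_lt.1 (abs_tanh_mul_tanh_lt_one (x / 2) (y / 2))
  rw [checkF, artanh_eq_real_artanh ⟨ht.1.le, ht.2.le⟩, mul_div_cancel_left₀ _ two_ne_zero,
    Real.tanh_artanh ⟨ht.1, ht.2⟩]

theorem checkF_comm (x y : ℝ) : checkF x y = checkF y x := by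
  rw [checkF, checkF, mul_comm (Real.tanh (x / 2))]

theorem abs_checkF_le_left (x y : ℝ) : |checkF x y| ≤ |x| := by
  refine strictMono_tanh_half.le_iff_le.1 ?_
  calc Real.tanh (|checkF x y| / 2) = |Real.tanh (x / 2)| * |Real.tanh (y / 2)| := by
        rw [← abs_tanh_half, tanh_half_checkF, abs_mul]
    _ ≤ |Real.tanh (x / 2)| := mul_le_of_le_one_right (abs_nonneg _) (Real.abs_tanh_lt_one _).le
    _ = Real.tanh (|x| / 2) := abs_tanh_half x

/-- `sign(f(x,y)) = sign(x)·sign(y)` and `|f(x,y)| ≤ min(|x|,|y|)` for all real `x, y`,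
justifying the min-sum approximation of the check-node operation. -/
theorem checkF_sign_and_min_bound (x y : ℝ) :
    Real.sign (checkF x y) = Real.sign x * Real.sign y ∧
    |checkF x y| ≤ min |x| |y| := by
  refine ⟨?_, le_min (abs_checkF_le_left x y) (checkF_comm x y ▸ abs_checkF_le_left y x)⟩
  rw [← sign_tanh_half, tanh_half_checkF, Real.sign_mul, sign_tanh_half, sign_tanh_half]
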